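/- arXiv:1507.03873 — 3 statements merged into one kernel-verified Lean document; each statement's English description precedes it below -/
import Mathlib

section
/- Let X : ℝ → ℝ² be a twice continuously differentiable, L-periodic curve (L > 0) with ‖X'(s)‖ = 1 for all s, which is injective on the interval [0, L). Then there exists r > 0 such that the normal map Φ(s,t) = X(s) + t·R(X'(s)) is injective on [0, L) × (-r, r); equivalently, for any two distinct points of the curve, the open normal line segments of radius r centered at those points are disjoint (existence of an r-tubular neighborhood, Lemma 2.1 of the paper). -/
/-!
A Lipschitz constant `K` of the unit tangent `X'` exists because `X''` is continuous and periodic.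
Projecting onto `X'(s)`, normal segments of radius `r` at parameters `s, s'` with
`K (|s' - s| + r) < 1` can only meet if `s = s'`: the tangential displacement of the curve is
`s' - s + O((s' - s)²)`, that of the normal only `O(r |s' - s|)`. By periodicity this settles all
pairs of parameters within `δ` of each other modulo `L`, where `2 K δ < 1` and `r ≤ δ`. The
remaining pairs form a compact set on which `‖X a - X b‖` has a positive lower bound `ε` by
injectivity, and `r ≤ ε / 2` keeps their segments apart.
-/

open RealInnerProductSpace

/-- Rotation by 90 degrees in the Euclidean plane: `R(a₁, a₂) = (-a₂, a₁)`. -/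
noncomputable def rot (a : EuclideanSpace ℝ (Fin 2)) : EuclideanSpace ℝ (Fin 2) :=
  (WithLp.equiv 2 (Fin 2 → ℝ)).symm ![-a 1, a 0]

open Set Function NNReal

local notation "ℝ²" => EuclideanSpace ℝ (Fin 2)

lemma inner_rot_self (a : ℝ²) : ⟪rot a, a⟫ = 0 := by
  simp [rot, PiLp.inner_apply, Fin.sum_univ_two]
  ring

lemma norm_rot (a : ℝ²) : ‖rot a‖ = ‖a‖ := by
  simp [rot, EuclideanSpace.norm_eq, Fin.sum_univ_two, add_comm]

lemma rot_sub (a b : ℝ²) : rot (a - b) = rot a - rot b := by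
  ext i; fin_cases i <;> simp [rot]; ring

theorem norm_sub_sub_smul_deriv_le {E : Type*} [NormedAddCommGroup E] [NormedSpace ℝ E]
    {f : ℝ → E} {K : ℝ≥0} (hf : Differentiable ℝ f) (hK : LipschitzWith K (deriv f)) (a b : ℝ) :
    ‖f b - f a - (b - a) • deriv f a‖ ≤ K * (b - a) ^ 2 := by
  have hderiv : ∀ x ∈ uIcc a b, HasDerivWithinAt (fun x => f x - x • deriv f a)
      (deriv f x - deriv f a) (uIcc a b) x := fun x _ => by
    have := (hf x).hasDerivAt.sub ((hasDerivAt_id' x).smul_const (deriv f a))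
    rw [one_smul] at this
    exact this.hasDerivWithinAt
  have hbound : ∀ x ∈ uIcc a b, ‖deriv f x - deriv f a‖ ≤ K * |b - a| := fun x hx =>
    (hK.norm_sub_le x a).trans (mul_le_mul_of_nonneg_left (abs_sub_left_of_mem_uIcc hx) K.2)
  calc ‖f b - f a - (b - a) • deriv f a‖ = ‖(f b - b • deriv f a) - (f a - a • deriv f a)‖ := by
        rw [sub_smul]; congr 1; abel
    _ ≤ K * |b - a| * ‖b - a‖ := (convex_uIcc a b).norm_image_sub_le_of_norm_hasDerivWithin_le
        hderiv hbound left_mem_uIcc right_mem_uIcc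
    _ = K * (b - a) ^ 2 := by rw [Real.norm_eq_abs, mul_assoc, abs_mul_abs_self, sq]

namespace Function.Periodic

variable {E : Type*} [NormedAddCommGroup E] [NormedSpace ℝ E]

protected theorem deriv {f : ℝ → E} {c : ℝ} (hf : Periodic f c) : Periodic (deriv f) c :=
  fun x => by rw [← deriv_comp_add_const, hf.funext]

theorem exists_lipschitzWith {f : ℝ → E} {c : ℝ} (hf : Periodic f c) (hc : c ≠ 0)
    (hf' : ContDiff ℝ 1 f) : ∃ K, LipschitzWith K f := by
  obtain ⟨C, hC⟩ := isBounded_iff_forall_norm_le.1 <|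
    hf.deriv.isBounded_of_continuous hc (hf'.continuous_deriv le_rfl)
  refine ⟨C.toNNReal, lipschitzWith_of_nnnorm_deriv_le (hf'.differentiable one_ne_zero) fun x => ?_⟩
  rw [← NNReal.coe_le_coe, coe_nnnorm]
  exact (hC _ ⟨x, rfl⟩).trans (Real.le_coe_toNNReal C)

theorem exists_sub_eq_zsmul_of_injOn {α : Type*} {f : ℝ → α} {c : ℝ} (hf : Periodic f c)
    (hc : 0 < c) (hinj : InjOn f (Ico 0 c)) {a b : ℝ} (hab : f a = f b) :
    ∃ n : ℤ, b - a = n • c := by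
  have hmod : ∀ x, f (toIcoMod hc 0 x) = f x := fun x => by
    conv_rhs => rw [← toIcoMod_add_toIcoDiv_zsmul hc 0 x]
    exact (hf.zsmul _ _).symm
  rw [← toIcoMod_eq_toIcoMod hc]
  exact hinj (toIcoMod_mem_Ico' hc a) (toIcoMod_mem_Ico' hc b) (by rw [hmod, hmod, hab])

theorem exists_pos_le_dist {α : Type*} [MetricSpace α] {f : ℝ → α} {c δ : ℝ}
    (hf : Periodic f c) (hc : 0 < c) (hcont : Continuous f) (hinj : InjOn f (Ico 0 c))
    (hδ : 0 < δ) :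
    ∃ ε > 0, ∀ a ∈ Icc 0 c, ∀ b ∈ Icc 0 c, δ ≤ |a - b| → |a - b| ≤ c - δ →
      ε ≤ dist (f a) (f b) := by
  set S : Set (ℝ × ℝ) := Icc 0 c ×ˢ Icc 0 c ∩ {p | δ ≤ |p.1 - p.2| ∧ |p.1 - p.2| ≤ c - δ}
  have hS : IsCompact S := (isCompact_Icc.prod isCompact_Icc).inter_right <|
    (isClosed_le continuous_const (continuous_fst.sub continuous_snd).abs).inter
      (isClosed_le (continuous_fst.sub continuous_snd).abs continuous_const)
  have hpos : ∀ p ∈ S, 0 < dist (f p.1) (f p.2) := by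
    rintro ⟨a, b⟩ ⟨-, hδle, hleδ⟩
    refine dist_pos.2 fun hab => ?_
    simp only at hδle hleδ hab
    obtain ⟨n, hn⟩ := hf.exists_sub_eq_zsmul_of_injOn hc hinj hab
    have habs : |a - b| = |(n : ℝ)| * c := by
      rw [abs_sub_comm, hn, zsmul_eq_mul, abs_mul, abs_of_pos hc]
    rcases eq_or_ne n 0 with rfl | hn0
    · rw [Int.cast_zero, abs_zero, zero_mul] at habs
      linarith
    · have : (1 : ℝ) ≤ |(n : ℝ)| := by exact_mod_cast Int.one_le_abs hn0
      nlinarith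
  obtain ⟨ε, hε, hεS⟩ := hS.exists_forall_le' (by fun_prop) hpos
  exact ⟨ε, hε, fun a ha b hb h₁ h₂ => hεS (a, b) ⟨⟨ha, hb⟩, h₁, h₂⟩⟩

end Function.Periodic

noncomputable def normalMap (X : ℝ → ℝ²) (p : ℝ × ℝ) : ℝ² := X p.1 + p.2 • rot (deriv X p.1)

section NormalMap

variable {X : ℝ → ℝ²}

theorem normalMap_add_period {L : ℝ} (hper : Periodic X L) (s t : ℝ) :
    normalMap X (s + L, t) = normalMap X (s, t) := by
  simp only [normalMap, hper s, hper.deriv s]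

theorem dist_le_of_normalMap_eq (hunit : ∀ s, ‖deriv X s‖ = 1) {s s' t t' : ℝ}
    (h : normalMap X (s, t) = normalMap X (s', t')) : dist (X s) (X s') ≤ |t| + |t'| := by
  have hdiff : X s - X s' = t' • rot (deriv X s') - t • rot (deriv X s) := by
    simp only [normalMap] at h
    rw [sub_eq_sub_iff_add_eq_add, h, add_comm]
  calc dist (X s) (X s') = ‖t' • rot (deriv X s') - t • rot (deriv X s)‖ := by
        rw [dist_eq_norm, hdiff]
    _ ≤ ‖t' • rot (deriv X s')‖ + ‖t • rot (deriv X s)‖ := norm_sub_le _ _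
    _ = |t| + |t'| := by simp [norm_smul, norm_rot, hunit, add_comm]

theorem eq_of_normalMap_eq {K : ℝ≥0} (hX : Differentiable ℝ X) (hK : LipschitzWith K (deriv X))
    {s s' t t' : ℝ} (hunit : ‖deriv X s‖ = 1) (hsmall : K * (|s' - s| + |t'|) < 1)
    (h : normalMap X (s, t) = normalMap X (s', t')) : s = s' ∧ t = t' := by
  set v := deriv X s
  set w := deriv X s'
  set d := s' - s
  have htangent : |⟪X s' - X s, v⟫ - d| ≤ K * d ^ 2 := by
    have hvv : ⟪v, v⟫ = 1 := by rw [real_inner_self_eq_norm_sq, hunit, one_pow]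
    calc |⟪X s' - X s, v⟫ - d| = |⟪X s' - X s - d • v, v⟫| := by
          rw [inner_sub_left (X s' - X s) (d • v), real_inner_smul_left, hvv, mul_one]
      _ ≤ ‖X s' - X s - d • v‖ * ‖v‖ := abs_real_inner_le_norm _ _
      _ ≤ K * d ^ 2 := by rw [hunit, mul_one]; exact norm_sub_sub_smul_deriv_le hX hK s s'
  have hnormal : |⟪rot w, v⟫| ≤ K * |d| := by
    calc |⟪rot w, v⟫| = |⟪rot (w - v), v⟫| := by
          rw [rot_sub, inner_sub_left, inner_rot_self, sub_zero]
      _ ≤ ‖rot (w - v)‖ * ‖v‖ := abs_real_inner_le_norm _ _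
      _ ≤ K * |d| := by rw [norm_rot, hunit, mul_one]; exact hK.norm_sub_le s' s
  have hproj : ⟪X s' - X s, v⟫ = -(t' * ⟪rot w, v⟫) := by
    have hdiff : X s' - X s = t • rot v - t' • rot w := by
      simp only [normalMap] at h
      rw [sub_eq_sub_iff_add_eq_add, ← h, add_comm]
    rw [hdiff, inner_sub_left, real_inner_smul_left, real_inner_smul_left, inner_rot_self, mul_zero,
      zero_sub]
  have hd : |d| ≤ K * d ^ 2 + |t'| * (K * |d|) := by
    calc |d| = |(d - ⟪X s' - X s, v⟫) - t' * ⟪rot w, v⟫| := by rw [hproj]; ring_nf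
      _ ≤ |d - ⟪X s' - X s, v⟫| + |t' * ⟪rot w, v⟫| := abs_sub _ _
      _ ≤ K * d ^ 2 + |t'| * (K * |d|) := by
          rw [abs_sub_comm, abs_mul]; gcongr
  have hd0 : d = 0 := by
    rw [← sq_abs] at hd
    have : |d| * (1 - K * (|d| + |t'|)) ≤ 0 := by nlinarith
    have := nonpos_of_mul_nonpos_left this (by linarith)
    exact abs_nonpos_iff.1 (by nlinarith [abs_nonneg d])
  have hss' : s = s' := by linarith [show s' - s = 0 from hd0]
  subst hss'
  have hrot : rot v ≠ 0 := by
    rw [← norm_ne_zero_iff, norm_rot, hunit]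
    exact one_ne_zero
  exact ⟨rfl, smul_left_injective ℝ hrot (add_left_cancel h)⟩

theorem normalMap_injOn {L δ r : ℝ} {K : ℝ≥0} (hX : Differentiable ℝ X)
    (hunit : ∀ s, ‖deriv X s‖ = 1) (hper : Periodic X L) (hK : LipschitzWith K (deriv X))
    (hKδ : K * δ < 1 / 2) (hrδ : r ≤ δ)
    (hsep : ∀ a ∈ Icc 0 L, ∀ b ∈ Icc 0 L, δ ≤ |a - b| → |a - b| ≤ L - δ →
      2 * r ≤ dist (X a) (X b)) :
    InjOn (normalMap X) (Ico 0 L ×ˢ Ioo (-r) r) := by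
  rintro ⟨s, t⟩ ⟨hs, ht⟩ ⟨s', t'⟩ ⟨hs', ht'⟩ h
  wlog hle : s ≤ s' generalizing s t s' t'
  · exact (this s' t' hs' ht' s t hs ht h.symm (le_of_not_ge hle)).symm
  have ht_lt : |t| < r := abs_lt.2 ht
  have ht'_lt : |t'| < r := abs_lt.2 ht'
  have hsmall : ∀ {x y : ℝ}, |x| < δ → |y| < r → K * (|x| + |y|) < 1 := fun {x y} hx hy => by
    nlinarith [K.2, abs_nonneg x, abs_nonneg y]
  rcases lt_or_ge |s' - s| δ with hnear | hδle
  · obtain ⟨rfl, rfl⟩ := eq_of_normalMap_eq hX hK (hunit s) (hsmall hnear ht'_lt) h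
    rfl
  rcases le_or_gt |s' - s| (L - δ) with hfar | hwrap
  · have hsep' := hsep s' (Ico_subset_Icc_self hs') s (Ico_subset_Icc_self hs) hδle hfar
    linarith [dist_le_of_normalMap_eq hunit h, dist_comm (X s) (X s')]
  · have hwrap' : |s + L - s'| < δ := by
      rw [abs_of_nonneg (sub_nonneg.2 hle)] at hwrap
      rw [abs_of_nonneg (by linarith [hs'.2, hs.1])]
      linarith
    have := (eq_of_normalMap_eq hX hK (hunit s') (hsmall hwrap' ht_lt)
      ((normalMap_add_period hper s t).trans h).symm).1
    linarith [hs'.2, hs.1]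

end NormalMap

/-- Existence of an `r`-tubular neighborhood of a closed `C²` unit-speed curve
(Lemma 2.1 of the paper). -/
theorem stmt0 (X : ℝ → EuclideanSpace ℝ (Fin 2)) (L : ℝ) (hL : 0 < L)
    (hX : ContDiff ℝ 2 X) (hunit : ∀ s : ℝ, ‖deriv X s‖ = 1)
    (hper : ∀ s : ℝ, X (s + L) = X s)
    (hinj : Set.InjOn X (Set.Ico 0 L)) :
    ∃ r : ℝ, 0 < r ∧
      Set.InjOn (fun p : ℝ × ℝ => X p.1 + p.2 • rot (deriv X p.1))
        (Set.Ico 0 L ×ˢ Set.Ioo (-r) r) := by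
  have hXper : Periodic X L := hper
  obtain ⟨K, hK⟩ := hXper.deriv.exists_lipschitzWith hL.ne' (hX.deriv' (n := 1))
  obtain ⟨δ, hδ, hKδ⟩ := exists_pos_mul_lt (one_half_pos (α := ℝ)) K
  obtain ⟨ε, hε, hsep⟩ := hXper.exists_pos_le_dist hL hX.continuous hinj hδ
  refine ⟨min δ (ε / 2), lt_min hδ (half_pos hε), normalMap_injOn
    (hX.differentiable two_ne_zero) hunit hXper hK hKδ (min_le_left _ _) fun a ha b hb h₁ h₂ => ?_⟩
  linarith [min_le_right δ (ε / 2), hsep a ha b hb h₁ h₂]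
end

section
/- Let X : ℝ → ℝ² be a twice continuously differentiable curve with ‖X'(s)‖ = 1 for all s, let a < b, and let κ > 0 satisfy ‖X''(s)‖ ≤ κ for all s ∈ [a,b] and κ·(b − a) ≤ 2. Then b − a ≤ 2·‖X(b) − X(a)‖, i.e. the arc length of the curve segment is at most twice the length of its chord. (Curvature form of the chord–arc inequality underlying Lemma B.1 of the paper.) -/
/-!
Let `v = X'(m)` be the unit tangent at the midpoint `m` of `[a, b]`. The curvature bound gives
`‖X'(s) - v‖ ≤ κ |s - m|`, and for unit vectors this means `⟪X'(s), v⟫ ≥ 1 - κ² (s - m)² / 2`.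
Integrating over `[a, b]` yields `⟪X(b) - X(a), v⟫ ≥ (b - a) - κ² (b - a)³ / 24`, which is at least
`5 (b - a) / 6` when `κ (b - a) ≤ 2`.
-/

open Set intervalIntegral
open scoped RealInnerProductSpace

theorem one_sub_sq_div_two_le_inner_of_norm_sub_le {E : Type*} [NormedAddCommGroup E]
    [InnerProductSpace ℝ E] {u w : E} (hu : ‖u‖ = 1) (hw : ‖w‖ = 1) {r : ℝ}
    (h : ‖u - w‖ ≤ r) : 1 - r ^ 2 / 2 ≤ ⟪u, w⟫ := by
  have hsq : ‖u - w‖ ^ 2 ≤ r ^ 2 := pow_le_pow_left₀ (norm_nonneg _) h 2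
  rw [norm_sub_sq_real, hu, hw] at hsq
  linarith

theorem integral_one_sub_mul_sq_sub_midpoint (a b c : ℝ) :
    ∫ s in a..b, (1 - c * (s - (a + b) / 2) ^ 2 / 2) = (b - a) - c * (b - a) ^ 3 / 24 := by
  have hsq : ∫ s in a..b, (s - (a + b) / 2) ^ 2 = (b - a) ^ 3 / 12 := by
    rw [integral_comp_sub_right (fun s => s ^ 2), integral_pow]
    ring
  have hint :
      IntervalIntegrable (fun s => c * (s - (a + b) / 2) ^ 2 / 2) MeasureTheory.volume a b :=
    (by fun_prop : Continuous fun s : ℝ => c * (s - (a + b) / 2) ^ 2 / 2).intervalIntegrable a b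
  rw [integral_sub intervalIntegrable_const hint, intervalIntegral.integral_div,
    integral_const_mul, hsq]
  simp only [integral_const, smul_eq_mul, mul_one]
  ring

theorem sub_sub_mul_cube_div_le_norm_sub {E : Type*} [NormedAddCommGroup E]
    [InnerProductSpace ℝ E] {γ γ' γ'' : ℝ → E} {a b κ : ℝ} (hab : a ≤ b)
    (hγ : ∀ s ∈ Icc a b, HasDerivAt γ (γ' s) s) (hγ' : ∀ s ∈ Icc a b, HasDerivAt γ' (γ'' s) s)
    (hunit : ∀ s ∈ Icc a b, ‖γ' s‖ = 1) (hcurv : ∀ s ∈ Icc a b, ‖γ'' s‖ ≤ κ) :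
    (b - a) - κ ^ 2 * (b - a) ^ 3 / 24 ≤ ‖γ b - γ a‖ := by
  have hm : (a + b) / 2 ∈ Icc a b := ⟨by linarith, by linarith⟩
  set m := (a + b) / 2
  set v := γ' m
  have hinner : ∀ s ∈ Icc a b, 1 - κ ^ 2 * (s - m) ^ 2 / 2 ≤ ⟪γ' s, v⟫ := by
    intro s hs
    have hdev : ‖γ' s - v‖ ≤ κ * |s - m| := by
      simpa only [Real.norm_eq_abs] using
        (convex_Icc a b).norm_image_sub_le_of_norm_hasDerivWithin_le
          (fun x hx => (hγ' x hx).hasDerivWithinAt) hcurv hm hs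
    simpa only [mul_pow, sq_abs] using
      one_sub_sq_div_two_le_inner_of_norm_sub_le (hunit s hs) (hunit m hm) hdev
  have hγ'_cont : ContinuousOn γ' (uIcc a b) := by
    rw [uIcc_of_le hab]
    exact fun s hs => (hγ' s hs).continuousAt.continuousWithinAt
  have hftc : ∫ s in a..b, ⟪γ' s, v⟫ = ⟪γ b - γ a, v⟫ := by
    have hderiv : ∀ s ∈ uIcc a b, HasDerivAt (fun t => ⟪γ t, v⟫) ⟪γ' s, v⟫ s := fun s hs =>
      ((hγ s (uIcc_of_le hab ▸ hs)).inner ℝ (hasDerivAt_const s v)).congr_deriv (by simp)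
    rw [integral_eq_sub_of_hasDerivAt hderiv
      (hγ'_cont.inner continuousOn_const).intervalIntegrable, inner_sub_left]
  calc (b - a) - κ ^ 2 * (b - a) ^ 3 / 24
      = ∫ s in a..b, (1 - κ ^ 2 * (s - m) ^ 2 / 2) :=
        (integral_one_sub_mul_sq_sub_midpoint a b _).symm
    _ ≤ ∫ s in a..b, ⟪γ' s, v⟫ :=
        integral_mono_on hab
          ((by fun_prop : Continuous fun s : ℝ => 1 - κ ^ 2 * (s - m) ^ 2 / 2).intervalIntegrable
            a b)
          (hγ'_cont.inner continuousOn_const).intervalIntegrable hinner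
    _ = ⟪γ b - γ a, v⟫ := hftc
    _ ≤ ‖γ b - γ a‖ * ‖v‖ := real_inner_le_norm _ _
    _ = ‖γ b - γ a‖ := by rw [hunit m hm, mul_one]

theorem stmt7_general (X : ℝ → EuclideanSpace ℝ (Fin 2))
    (hX : ContDiff ℝ 2 X) (hunit : ∀ s : ℝ, ‖deriv X s‖ = 1)
    (a b κ : ℝ) (hab : a < b)
    (hcurv : ∀ s ∈ Set.Icc a b, ‖deriv (deriv X) s‖ ≤ κ)
    (hsmall : κ * (b - a) ≤ 2) :
    b - a ≤ 2 * ‖X b - X a‖ := by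
  have hX' : ContDiff ℝ 1 (deriv X) := ContDiff.deriv' (n := 1) hX
  have hchord := sub_sub_mul_cube_div_le_norm_sub hab.le
    (fun s _ => (hX.differentiable two_ne_zero s).hasDerivAt)
    (fun s _ => (hX'.differentiable one_ne_zero s).hasDerivAt) (fun s _ => hunit s) hcurv
  have hκ : 0 ≤ κ := (norm_nonneg _).trans (hcurv a ⟨le_rfl, hab.le⟩)
  have hκsq : κ ^ 2 * (b - a) ^ 2 ≤ 4 := by
    rw [← mul_pow]
    nlinarith [mul_nonneg hκ (sub_pos.mpr hab).le]
  have hcube : κ ^ 2 * (b - a) ^ 3 ≤ 4 * (b - a) := by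
    nlinarith [sub_pos.mpr hab]
  linarith

/-- Curvature form of the chord–arc inequality underlying Lemma B.1 of the
paper: if a unit-speed `C²` plane curve has curvature bounded by `κ` on
`[a,b]` and `κ·(b-a) ≤ 2`, then the arc length `b - a` is at most twice the
chord length `‖X(b) - X(a)‖`. -/
theorem stmt7 (X : ℝ → EuclideanSpace ℝ (Fin 2))
    (hX : ContDiff ℝ 2 X) (hunit : ∀ s : ℝ, ‖deriv X s‖ = 1)
    (a b κ : ℝ) (hab : a < b) (hκ : 0 < κ)
    (hcurv : ∀ s ∈ Set.Icc a b, ‖deriv (deriv X) s‖ ≤ κ)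
    (hsmall : κ * (b - a) ≤ 2) :
    b - a ≤ 2 * ‖X b - X a‖ :=
  stmt7_general X hX hunit a b κ hab hcurv hsmall
end

section
/- Let a > 0 and b > 0, and let f : ℝ → ℝ be continuously differentiable on the interval [0, a+b]. Then (1/a)·∫₀^a f(x)² dx ≤ (2/b)·∫_a^{a+b} f(x)² dx + 2(a+b)·∫₀^{a+b} f'(x)² dx. (One-dimensional transfer inequality: the mean-square of f on a possibly small subinterval is controlled by its mean-square on an adjacent subinterval plus a derivative term; this is the fundamental-theorem-of-calculus estimate underlying the trace inequality of Lemma 5.1 of the paper, which passes from a small cut edge e⁻ to a full interior edge e₁ of the patch.) -/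
/-!
By the fundamental theorem of calculus and Cauchy–Schwarz, for `x ≤ y` in `[0, a + b]`,
`f x ^ 2 ≤ 2 f y ^ 2 + 2 (a + b) ∫₀^{a+b} f' ^ 2`. Averaging in `y` over `[a, a + b]` bounds
`f x ^ 2` for every `x ∈ [0, a]`, and averaging that bound in `x` over `[0, a]` gives the claim.
-/

open MeasureTheory Set

theorem sq_intervalIntegral_le_mul_intervalIntegral_sq {c d : ℝ} (hcd : c ≤ d)
    {g : ℝ → ℝ} (hg : IntervalIntegrable g volume c d)
    (hg2 : IntervalIntegrable (fun t => g t ^ 2) volume c d) :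
    (∫ t in c..d, g t) ^ 2 ≤ (d - c) * ∫ t in c..d, g t ^ 2 := by
  rcases hcd.eq_or_lt with rfl | hlt
  · simp
  set I := ∫ t in c..d, g t
  set S := ∫ t in c..d, g t ^ 2
  -- `0 ≤ ∫ ((d - c) g - I) ^ 2 = (d - c) ((d - c) S - I ^ 2)`
  have hnonneg : 0 ≤ ∫ t in c..d, ((d - c) * g t - I) ^ 2 :=
    intervalIntegral.integral_nonneg hcd fun t _ => sq_nonneg _
  have hexpand : ∫ t in c..d, ((d - c) * g t - I) ^ 2 = (d - c) * ((d - c) * S - I ^ 2) := by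
    have hsq : ∀ t, ((d - c) * g t - I) ^ 2 =
        (d - c) ^ 2 * g t ^ 2 - 2 * (d - c) * I * g t + I ^ 2 := fun t => by ring
    simp_rw [hsq]
    rw [intervalIntegral.integral_add ((hg2.const_mul _).sub (hg.const_mul _))
        intervalIntegrable_const,
      intervalIntegral.integral_sub (hg2.const_mul _) (hg.const_mul _),
      intervalIntegral.integral_const_mul, intervalIntegral.integral_const_mul,
      intervalIntegral.integral_const, smul_eq_mul]
    ring
  rw [hexpand] at hnonneg
  linarith [nonneg_of_mul_nonneg_right hnonneg (sub_pos.mpr hlt)]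

theorem mul_le_intervalIntegral_of_forall_le {c d m : ℝ} {g : ℝ → ℝ} (hcd : c ≤ d)
    (hg : IntervalIntegrable g volume c d) (h : ∀ y ∈ Icc c d, m ≤ g y) :
    (d - c) * m ≤ ∫ y in c..d, g y := by
  simpa using intervalIntegral.integral_mono_on hcd intervalIntegrable_const hg h

theorem intervalIntegral_le_mul_of_forall_le {c d M : ℝ} {g : ℝ → ℝ} (hcd : c ≤ d)
    (hg : IntervalIntegrable g volume c d) (h : ∀ y ∈ Icc c d, g y ≤ M) :
    ∫ y in c..d, g y ≤ (d - c) * M := by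
  simpa using intervalIntegral.integral_mono_on hcd hg intervalIntegrable_const h

section DerivOnIcc

variable {f f' : ℝ → ℝ} {c d : ℝ}
  (hderiv : ∀ t ∈ Icc c d, HasDerivWithinAt f (f' t) (Icc c d) t)
  (hcont : ContinuousOn f' (Icc c d))
include hderiv hcont

theorem sub_eq_intervalIntegral_of_hasDerivWithinAt_Icc {x y : ℝ} (hx : c ≤ x) (hxy : x ≤ y)
    (hy : y ≤ d) : f y - f x = ∫ t in x..y, f' t := by
  have hsub : Icc x y ⊆ Icc c d := Icc_subset_Icc hx hy
  refine (intervalIntegral.integral_eq_sub_of_hasDeriv_right_of_le hxy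
    (fun t ht => (hderiv t (hsub ht)).continuousWithinAt.mono hsub) (fun t ht => ?_)
    ((hcont.mono hsub).intervalIntegrable_of_Icc hxy)).symm
  have hint : Icc c d ∈ nhds t := Icc_mem_nhds (hx.trans_lt ht.1) (ht.2.trans_le hy)
  exact ((hderiv t (hsub (Ioo_subset_Icc_self ht))).hasDerivAt hint).hasDerivWithinAt

theorem sq_le_two_mul_sq_add_of_hasDerivWithinAt_Icc {x y : ℝ} (hx : c ≤ x) (hxy : x ≤ y)
    (hy : y ≤ d) : f x ^ 2 ≤ 2 * f y ^ 2 + 2 * (d - c) * ∫ t in c..d, f' t ^ 2 := by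
  have hsub : Icc x y ⊆ Icc c d := Icc_subset_Icc hx hy
  set I := ∫ t in x..y, f' t
  have hftc : f x = f y - I := by
    linarith [sub_eq_intervalIntegral_of_hasDerivWithinAt_Icc hderiv hcont hx hxy hy]
  have hI : I ^ 2 ≤ (d - c) * ∫ t in c..d, f' t ^ 2 :=
    calc I ^ 2 ≤ (y - x) * ∫ t in x..y, f' t ^ 2 :=
          sq_intervalIntegral_le_mul_intervalIntegral_sq hxy
            ((hcont.mono hsub).intervalIntegrable_of_Icc hxy)
            (((hcont.mono hsub).pow 2).intervalIntegrable_of_Icc hxy)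
      _ ≤ (d - c) * ∫ t in c..d, f' t ^ 2 :=
          mul_le_mul (by linarith)
            (intervalIntegral.integral_mono_interval hx hxy hy
              (Filter.Eventually.of_forall fun t => sq_nonneg _)
              ((hcont.pow 2).intervalIntegrable_of_Icc (hx.trans (hxy.trans hy))))
            (intervalIntegral.integral_nonneg hxy fun t _ => sq_nonneg _) (by linarith)
  rw [hftc]
  nlinarith [sq_nonneg (f y + I)]

end DerivOnIcc

/-- One-dimensional transfer inequality underlying the trace inequality of
Lemma 5.1 of the paper: for `f` continuously differentiable on `[0, a+b]`,
the mean-square of `f` on `[0,a]` is controlled by its mean-square on the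
adjacent interval `[a, a+b]` plus a derivative term. -/
theorem stmt12 (a b : ℝ) (ha : 0 < a) (hb : 0 < b) (f f' : ℝ → ℝ)
    (hderiv : ∀ x ∈ Set.Icc (0 : ℝ) (a + b),
      HasDerivWithinAt f (f' x) (Set.Icc (0 : ℝ) (a + b)) x)
    (hcont : ContinuousOn f' (Set.Icc (0 : ℝ) (a + b))) :
    (1 / a) * ∫ x in (0 : ℝ)..a, (f x) ^ 2 ≤
      (2 / b) * (∫ x in a..(a + b), (f x) ^ 2) +
        2 * (a + b) * ∫ x in (0 : ℝ)..(a + b), (f' x) ^ 2 := by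
  set K := ∫ x in (0 : ℝ)..(a + b), f' x ^ 2
  set C := (2 / b) * (∫ x in a..(a + b), f x ^ 2) + 2 * (a + b) * K
  have hf : ContinuousOn f (Icc 0 (a + b)) := fun x hx => (hderiv x hx).continuousWithinAt
  have hf2 : ContinuousOn (fun x => f x ^ 2) (Icc 0 (a + b)) := hf.pow 2
  have hpoint : ∀ x ∈ Icc 0 a, ∀ y ∈ Icc a (a + b),
      f x ^ 2 ≤ 2 * f y ^ 2 + 2 * (a + b) * K := fun x hx y hy => by
    simpa using sq_le_two_mul_sq_add_of_hasDerivWithinAt_Icc hderiv hcont hx.1 (hx.2.trans hy.1)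
      hy.2
  have hbound : ∀ x ∈ Icc 0 a, f x ^ 2 ≤ C := fun x hx => by
    have hint : IntervalIntegrable (fun y => f y ^ 2) volume a (a + b) :=
      (hf2.mono (Icc_subset_Icc ha.le le_rfl)).intervalIntegrable_of_Icc (by linarith)
    have havg := mul_le_intervalIntegral_of_forall_le (by linarith)
      ((hint.const_mul 2).add intervalIntegrable_const) (hpoint x hx)
    rw [intervalIntegral.integral_add (hint.const_mul 2) intervalIntegrable_const,
      intervalIntegral.integral_const_mul, intervalIntegral.integral_const, smul_eq_mul,
      add_sub_cancel_left] at havg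
    have hCb : C * b = 2 * (∫ y in a..(a + b), f y ^ 2) + b * (2 * (a + b) * K) := by
      simp only [C]; field_simp
    rw [← mul_le_mul_iff_of_pos_right hb, hCb]
    linarith
  have hint : ∫ x in (0 : ℝ)..a, f x ^ 2 ≤ a * C := by
    simpa using intervalIntegral_le_mul_of_forall_le ha.le
      ((hf2.mono (Icc_subset_Icc le_rfl (by linarith))).intervalIntegrable_of_Icc ha.le) hbound
  rw [one_div_mul_eq_div, div_le_iff₀ ha]
  linarith
end
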